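/- arXiv:2404.07277 — 2 statements merged into one kernel-verified Lean document; each statement's English description precedes it below -/
import Mathlib

section
/- For jointly distributed discrete random variables A and B on finite alphabets, the optimal success probability of estimating A from B, max over functions f : B → A of Pr(f(B) = A), satisfies max_f Pr(f(B)=A) ≥ 2^{-H(A|B)}, where H(A|B) is the conditional Shannon entropy. -/
/-- the optimal success probability of estimating `A` from `B` is at
least `2^{-H(A|B)}`, where `H(A|B)` is the conditional Shannon entropy (in bits). -/
theorem exists_estimator_success_ge_two_pow_neg_condEnt
    {A B : Type*} [Fintype A] [Fintype B] [Nonempty A]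
    (p : A × B → ℝ) (hp : ∀ x, 0 ≤ p x) (hsum : ∑ x, p x = 1)
    (pB : B → ℝ) (hpB : ∀ b, pB b = ∑ a, p (a, b))
    (H : ℝ)
    (hH : H = - ∑ a, ∑ b, p (a, b) * Real.logb 2 (p (a, b) / pB b)) :
    ∃ f : B → A, ∑ b, p (f b, b) ≥ (2 : ℝ) ^ (-H) := by
  classical
  have hex : ∀ b : B, ∃ a : A, ∀ a' : A, p (a', b) ≤ p (a, b) := by
    intro b
    obtain ⟨a, -, ha⟩ := Finset.exists_max_image (Finset.univ : Finset A)
      (fun a => p (a, b)) ⟨Classical.arbitrary A, Finset.mem_univ _⟩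
    exact ⟨a, fun a' => ha a' (Finset.mem_univ _)⟩
  choose f hf using hex
  refine ⟨f, ?_⟩
  have hle : ∀ z : A × B, p z ≤ pB z.2 := by
    rintro ⟨a, b⟩
    rw [hpB]
    exact Finset.single_le_sum (fun a' _ => hp (a', b)) (Finset.mem_univ a)
  have hpB0 : ∀ b, 0 ≤ pB b := fun b => (hp (f b, b)).trans (hle (f b, b))
  have hlog2 : Real.log 2 ≠ 0 := ne_of_gt (Real.log_pos (by norm_num))
  set y : A × B → ℝ := fun z => Real.log 2 * Real.logb 2 (p z / pB z.2) with hy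
  have jensen : Real.exp (∑ z, p z • y z) ≤ ∑ z, p z • Real.exp (y z) :=
    convexOn_exp.map_sum_le (fun z _ => hp z) (by simpa using hsum)
      (fun z _ => Set.mem_univ _)
  have hLHS : Real.exp (∑ z, p z • y z) = (2 : ℝ) ^ (-H) := by
    rw [Real.rpow_def_of_pos (by norm_num : (0:ℝ) < 2)]
    congr 1
    have h1 : ∑ z : A × B, p z • y z
        = Real.log 2 * ∑ z : A × B, p z * Real.logb 2 (p z / pB z.2) := by
      rw [Finset.mul_sum]
      refine Finset.sum_congr rfl fun z _ => ?_
      simp only [hy, smul_eq_mul]; ring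
    have h2 : ∑ z : A × B, p z * Real.logb 2 (p z / pB z.2)
        = ∑ a, ∑ b, p (a, b) * Real.logb 2 (p (a, b) / pB b) :=
      Fintype.sum_prod_type _
    rw [h1, h2, hH, neg_neg]
  have hterm : ∀ z : A × B, p z • Real.exp (y z) = p z ^ 2 / pB z.2 := by
    intro z
    rcases eq_or_lt_of_le (hp z) with h0 | h0
    · simp [← h0]
    · have hpBpos : 0 < pB z.2 := lt_of_lt_of_le h0 (hle z)
      have ht : 0 < p z / pB z.2 := div_pos h0 hpBpos
      have hexp : Real.exp (y z) = p z / pB z.2 := by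
        rw [hy]
        simp only [Real.logb]
        rw [mul_div_cancel₀ _ hlog2]
        exact Real.exp_log ht
      rw [smul_eq_mul, hexp, sq, mul_div_assoc]
  have hsum2 : ∑ z : A × B, p z ^ 2 / pB z.2 ≤ ∑ b, p (f b, b) := by
    rw [Fintype.sum_prod_type_right]
    refine Finset.sum_le_sum fun b _ => ?_
    rcases eq_or_lt_of_le (hpB0 b) with h0 | h0
    · have hz : ∀ a, p (a, b) = 0 := fun a =>
        le_antisymm (h0 ▸ hle (a, b)) (hp _)
      simp [hz]
    · calc ∑ a, p (a, b) ^ 2 / pB b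
          ≤ ∑ a, p (a, b) * p (f b, b) / pB b := by
            refine Finset.sum_le_sum fun a _ => ?_
            rw [sq]
            gcongr
            · exact hp _
            · exact hf b a
        _ = p (f b, b) := by
            rw [← Finset.sum_div, ← Finset.sum_mul, ← hpB]
            field_simp
  calc (2 : ℝ) ^ (-H) = Real.exp (∑ z, p z • y z) := hLHS.symm
    _ ≤ ∑ z, p z • Real.exp (y z) := jensen
    _ = ∑ z : A × B, p z ^ 2 / pB z.2 := Finset.sum_congr rfl fun z _ => hterm z
    _ ≤ ∑ b, p (f b, b) := hsum2
end

section
/- Minimax lower bound via Fano: with V a 2ε-packing of A of size M ≥ 2, V uniform on {1,…,M}, and observations B generated from p(·|α_v), for any nondecreasing ℓ : ℝ≥0 → ℝ≥0, min over estimators α̂ : B → A of max_{α∈A} E_{B∼p(·|α)}[ℓ(d(α̂(B), α))] ≥ ℓ(ε)·(H(V|B) − 1)/log₂ M. -/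
/-!
Minimum-distance decoding turns any estimator `α̂` into a decoder `ψ` of the index `V`: since the
points `α_v` are `2ε`-separated, `ψ(b) ≠ v` forces `d(α̂(b), α_v) ≥ ε`, so the risk of `α̂` at
`α_v`, averaged over `v`, is at least `ℓ(ε)` times the error probability `P(ψ(B) ≠ V)`. Fano's
inequality `H(V|B) ≤ 1 + P(ψ(B) ≠ V) log₂ M` bounds that probability from below. Fano is proved
fibrewise: for each `b` it is Gibbs' inequality comparing the conditional law of `V` with the
sub-probability putting mass `1/2` on `ψ(b)` and `1/(2M)` on every other point.
-/

open Finset Real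

namespace Real

lemma mul_log_div_le_sub {x y : ℝ} (hx : 0 ≤ x) (hy : 0 < y) : x * log (y / x) ≤ y - x := by
  rcases hx.eq_or_lt with rfl | hx
  · simpa using hy.le
  · calc x * log (y / x) ≤ x * (y / x - 1) :=
          mul_le_mul_of_nonneg_left (log_le_sub_one_of_pos (by positivity)) hx.le
      _ = y - x := by field_simp

end Real

section Entropy

variable {ι B : Type*} [Fintype ι] [Fintype B]

theorem sum_mul_logb_sum_div_le_sum_mul_logb_inv {b : ℝ} (hb : 1 < b) {r t : ι → ℝ}
    (hr : ∀ v, 0 ≤ r v) (ht : ∀ v, 0 < t v) (ht_sum : ∑ v, t v ≤ 1) :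
    ∑ v, r v * logb b ((∑ w, r w) / r v) ≤ ∑ v, r v * logb b (t v)⁻¹ := by
  set m := ∑ w, r w
  have hm : 0 ≤ m := sum_nonneg fun v _ => hr v
  have hterm : ∀ v, r v * log (m / r v) ≤ r v * log (t v)⁻¹ + (m * t v - r v) := by
    intro v
    rcases (hr v).eq_or_lt with h | h
    · simp only [← h, zero_mul, sub_zero, zero_add]
      exact mul_nonneg hm (ht v).le
    · have hm : 0 < m := h.trans_le (single_le_sum (fun w _ => hr w) (mem_univ v))
      have hsplit : log (m / r v) = log (t v)⁻¹ + log (m * t v / r v) := by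
        rw [← log_mul (inv_pos.2 (ht v)).ne' (by have := ht v; positivity)]
        congr 1
        field_simp [(ht v).ne']
      rw [hsplit, mul_add]
      gcongr
      exact mul_log_div_le_sub h.le (by have := ht v; positivity)
  have hgibbs : ∑ v, r v * log (m / r v) ≤ ∑ v, r v * log (t v)⁻¹ := by
    calc ∑ v, r v * log (m / r v) ≤ ∑ v, (r v * log (t v)⁻¹ + (m * t v - r v)) :=
          sum_le_sum fun v _ => hterm v
      _ = ∑ v, r v * log (t v)⁻¹ + m * (∑ v, t v - 1) := by
          rw [sum_add_distrib, sum_sub_distrib, ← mul_sum]; ring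
      _ ≤ ∑ v, r v * log (t v)⁻¹ :=
          add_le_of_nonpos_right (mul_nonpos_of_nonneg_of_nonpos hm (by linarith))
  simp only [logb, mul_div_assoc', ← sum_div]
  exact div_le_div_of_nonneg_right hgibbs (log_pos hb).le

theorem sum_mul_logb_sum_div_le_add_mul_logb_card {r : ι → ℝ} (hr : ∀ v, 0 ≤ r v) (j : ι) :
    ∑ v, r v * logb 2 ((∑ w, r w) / r v)
      ≤ ∑ v, r v + (∑ v, r v - r j) * logb 2 (Fintype.card ι) := by
  classical
  have hcard : (0 : ℝ) < Fintype.card ι := by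
    exact_mod_cast Fintype.card_pos_iff.2 ⟨j⟩
  let t : ι → ℝ := fun v => if v = j then 1 / 2 else (2 * Fintype.card ι)⁻¹
  have ht : ∀ v, 0 < t v := fun v => by
    dsimp only [t]; split_ifs <;> positivity
  have ht_sum : ∑ v, t v ≤ 1 := by
    calc ∑ v, t v ≤ ∑ v, ((2 * Fintype.card ι : ℝ)⁻¹ + if v = j then 1 / 2 else 0) :=
          sum_le_sum fun v _ => by dsimp only [t]; split_ifs <;> norm_num
      _ = 1 := by
          rw [sum_add_distrib, sum_const, card_univ, sum_ite_eq', if_pos (mem_univ j),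
            nsmul_eq_mul]
          field_simp
          norm_num
  have hlog : ∀ v, r v * logb 2 (t v)⁻¹
      = r v + (r v - if v = j then r v else 0) * logb 2 (Fintype.card ι) := fun v => by
    dsimp only [t]
    split_ifs
    · norm_num
    · rw [inv_inv, logb_mul (by norm_num) hcard.ne', logb_self_eq_one one_lt_two]
      ring
  calc ∑ v, r v * logb 2 ((∑ w, r w) / r v) ≤ ∑ v, r v * logb 2 (t v)⁻¹ :=
        sum_mul_logb_sum_div_le_sum_mul_logb_inv one_lt_two hr ht ht_sum
    _ = ∑ v, r v + (∑ v, r v - r j) * logb 2 (Fintype.card ι) := by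
        simp only [hlog, sum_add_distrib, ← sum_mul, sum_sub_distrib, sum_ite_eq',
          if_pos (mem_univ j)]

/-- The conditional Shannon entropy `H(V|B)` in bits of a joint law `p v b` of `(V, B)`. -/
noncomputable def condEntropy (p : ι → B → ℝ) : ℝ :=
  -∑ v, ∑ b, p v b * logb 2 (p v b / ∑ w, p w b)

/-- The probability `P(ψ(B) ≠ V)` that the decoder `ψ` misses `V` under the joint law `p`. -/
def errorProb (p : ι → B → ℝ) (ψ : B → ι) : ℝ :=
  ∑ b, (∑ v, p v b - p (ψ b) b)

lemma errorProb_const_mul (c : ℝ) (p : ι → B → ℝ) (ψ : B → ι) :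
    errorProb (fun v b => c * p v b) ψ = c * errorProb p ψ := by
  simp only [errorProb, ← mul_sum, ← mul_sub]

theorem condEntropy_le_add_errorProb_mul {p : ι → B → ℝ} (hp : ∀ v b, 0 ≤ p v b) (ψ : B → ι) :
    condEntropy p ≤ ∑ v, ∑ b, p v b + errorProb p ψ * logb 2 (Fintype.card ι) := by
  have hflip : condEntropy p = ∑ b, ∑ v, p v b * logb 2 ((∑ w, p w b) / p v b) := by
    simp only [condEntropy, ← inv_div (∑ w, p w _), logb_inv, mul_neg, sum_neg_distrib, neg_neg]
    exact sum_comm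
  calc condEntropy p
      ≤ ∑ b, (∑ v, p v b + (∑ v, p v b - p (ψ b) b) * logb 2 (Fintype.card ι)) := by
        rw [hflip]
        exact sum_le_sum fun b _ =>
          sum_mul_logb_sum_div_le_add_mul_logb_card (fun v => hp v b) (ψ b)
    _ = ∑ v, ∑ b, p v b + errorProb p ψ * logb 2 (Fintype.card ι) := by
        rw [sum_add_distrib, sum_comm, errorProb, sum_mul]

end Entropy

theorem exists_forall_ne_le_dist_of_packing {X ι : Type*} [PseudoMetricSpace X] [Nonempty ι]
    {ε : ℝ} {α : ι → X} (hα : ∀ v w, v ≠ w → 2 * ε ≤ dist (α v) (α w)) (x : X) :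
    ∃ w, ∀ v, v ≠ w → ε ≤ dist x (α v) := by
  by_cases hnear : ∃ w, dist x (α w) < ε
  · obtain ⟨w, hw⟩ := hnear
    refine ⟨w, fun v hvw => ?_⟩
    have := hα v w hvw
    have := dist_triangle_left (α v) (α w) x
    linarith
  · push Not at hnear
    exact ⟨Classical.arbitrary ι, fun v _ => hnear v⟩

theorem mul_sum_sub_le_sum_mul {ι : Type*} [Fintype ι] [DecidableEq ι] {r g : ι → ℝ} {c : ℝ}
    (hr : ∀ v, 0 ≤ r v) (hg : ∀ v, 0 ≤ g v) (j : ι) (hc : ∀ v, v ≠ j → c ≤ g v) :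
    c * (∑ v, r v - r j) ≤ ∑ v, r v * g v := by
  rw [← sum_erase_eq_sub (mem_univ j), mul_sum]
  calc ∑ v ∈ univ.erase j, c * r v ≤ ∑ v ∈ univ.erase j, r v * g v :=
        sum_le_sum fun v hv => by
          rw [mul_comm]
          exact mul_le_mul_of_nonneg_left (hc v (ne_of_mem_erase hv)) (hr v)
    _ ≤ ∑ v, r v * g v :=
        sum_le_sum_of_subset_of_nonneg (erase_subset j univ)
          fun v _ _ => mul_nonneg (hr v) (hg v)

theorem minimax_lower_bound_via_fano_general
    {X B : Type*} [MetricSpace X] [Fintype B]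
    (A : Set X) (ε : ℝ) (hε : 0 < ε)
    (M : ℕ) (hM : 2 ≤ M) (αv : Fin M → X) (hmem : ∀ v, αv v ∈ A)
    (hpack : ∀ v v' : Fin M, v ≠ v' → 2 * ε ≤ dist (αv v) (αv v'))
    (q : X → B → ℝ) (hq : ∀ α ∈ A, (∀ b, 0 ≤ q α b) ∧ ∑ b, q α b = 1)
    (pB : B → ℝ) (hpB : ∀ b, pB b = ∑ v, (1 / (M : ℝ)) * q (αv v) b)
    (HVB : ℝ)
    (hHVB : HVB = - ∑ v : Fin M, ∑ b,
        ((1 / (M : ℝ)) * q (αv v) b) *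
          Real.logb 2 (((1 / (M : ℝ)) * q (αv v) b) / pB b))
    (ℓ : ℝ → ℝ) (hℓmono : ∀ x y, 0 ≤ x → x ≤ y → ℓ x ≤ ℓ y)
    (hℓpos : ∀ x, 0 ≤ x → 0 ≤ ℓ x)
    (αhat : B → X) :
    ∃ α ∈ A,
      (∑ b, q α b * ℓ (dist (αhat b) α))
        ≥ ℓ ε * ((HVB - 1) / Real.logb 2 (M : ℝ)) := by
  have : Nonempty (Fin M) := ⟨⟨0, by omega⟩⟩
  choose ψ hψ using fun b => exists_forall_ne_le_dist_of_packing hpack (αhat b)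
  set Q : Fin M → B → ℝ := fun v b => q (αv v) b
  have hQ : ∀ v b, 0 ≤ Q v b := fun v b => (hq _ (hmem v)).1 b
  set p : Fin M → B → ℝ := fun v b => 1 / (M : ℝ) * Q v b
  have hp : ∀ v b, 0 ≤ p v b := fun v b => mul_nonneg (by positivity) (hQ v b)
  have hM0 : (M : ℝ) ≠ 0 := by positivity
  have hfano : HVB ≤ 1 + errorProb p ψ * logb 2 M := by
    have hHVB' : HVB = condEntropy p := by simp only [hHVB, hpB]; rfl
    have hmass : ∑ v, ∑ b, p v b = 1 := by simp [p, ← mul_sum, (hq _ (hmem _)).2, Q, hM0]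
    simpa [← hHVB', hmass] using condEntropy_le_add_errorProb_mul hp ψ
  set risk : Fin M → ℝ := fun v => ∑ b, Q v b * ℓ (dist (αhat b) (αv v))
  have hrisk : ∑ _v : Fin M, ℓ ε * errorProb p ψ ≤ ∑ v, risk v := by
    have hPe : errorProb p ψ = 1 / M * errorProb Q ψ := errorProb_const_mul _ _ _
    calc ∑ _v : Fin M, ℓ ε * errorProb p ψ = ∑ b, ℓ ε * (∑ v, Q v b - Q (ψ b) b) := by
          rw [sum_const, card_univ, Fintype.card_fin, nsmul_eq_mul, hPe, errorProb, ← mul_sum]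
          field_simp
      _ ≤ ∑ b, ∑ v, Q v b * ℓ (dist (αhat b) (αv v)) :=
          sum_le_sum fun b _ => mul_sum_sub_le_sum_mul (fun v => hQ v b)
            (fun v => hℓpos _ dist_nonneg) (ψ b) fun v hv => hℓmono _ _ hε.le (hψ b v hv)
      _ = ∑ v, risk v := sum_comm
  obtain ⟨v, -, hv⟩ := exists_le_of_sum_le univ_nonempty hrisk
  have hlogM : 0 < logb 2 M := logb_pos one_lt_two (by exact_mod_cast hM)
  refine ⟨αv v, hmem v, le_trans ?_ hv⟩
  refine mul_le_mul_of_nonneg_left ?_ (hℓpos ε hε.le)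
  rw [div_le_iff₀ hlogM]
  linarith

/-- minimax lower bound via Fano: for any estimator, the worst-case
expected loss is at least `ℓ(ε) · (H(V|B) − 1) / log₂ M`, where `V` is uniform on a
`2ε`-packing of size `M ≥ 2` and `H(V|B)` is the conditional Shannon entropy (bits)
of the joint distribution `p(v,b) = (1/M) p(b|α_v)`. -/
theorem minimax_lower_bound_via_fano
    {X B : Type*} [MetricSpace X] [Fintype B]
    (A : Set X) (hA : Bornology.IsBounded A) (ε : ℝ) (hε : 0 < ε)
    (M : ℕ) (hM : 2 ≤ M) (αv : Fin M → X) (hmem : ∀ v, αv v ∈ A)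
    (hpack : ∀ v v' : Fin M, v ≠ v' → 2 * ε ≤ dist (αv v) (αv v'))
    (q : X → B → ℝ) (hq : ∀ α ∈ A, (∀ b, 0 ≤ q α b) ∧ ∑ b, q α b = 1)
    (pB : B → ℝ) (hpB : ∀ b, pB b = ∑ v, (1 / (M : ℝ)) * q (αv v) b)
    (HVB : ℝ)
    (hHVB : HVB = - ∑ v : Fin M, ∑ b,
        ((1 / (M : ℝ)) * q (αv v) b) *
          Real.logb 2 (((1 / (M : ℝ)) * q (αv v) b) / pB b))
    (ℓ : ℝ → ℝ) (hℓmono : ∀ x y, 0 ≤ x → x ≤ y → ℓ x ≤ ℓ y)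
    (hℓpos : ∀ x, 0 ≤ x → 0 ≤ ℓ x)
    (αhat : B → X) :
    ∃ α ∈ A,
      (∑ b, q α b * ℓ (dist (αhat b) α))
        ≥ ℓ ε * ((HVB - 1) / Real.logb 2 (M : ℝ)) :=
  minimax_lower_bound_via_fano_general A ε hε M hM αv hmem hpack q hq pB hpB HVB hHVB ℓ hℓmono hℓpos
    αhat
end
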